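/- arXiv:1101.3014 — 5 statements merged into one kernel-verified Lean document; each statement's English description precedes it below -/
import Mathlib

section
/- Let (M,ρ) be a finite pseudometric space with ρ not identically zero, and let 𝒢 = (G,w) be a generalized filling of (M,ρ) whose type G is a tree in which every vertex of degree 1 is boundary. Then for every cyclic order π on M that is planar with respect to G, w(𝒢) ≥ (1/2) Σ_{k=0}^{n-1} ρ(π(k),π(k+1)); in particular w(𝒢) > 0, and hence the generalized minimal filling weight mf₋(M) is positive. -/
open scoped BigOperators

namespace MinFill

variable {V : Type*}

/-- The total weight of a (generalized) weighted graph: the sum of the weights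
of its edges. -/
noncomputable def graphWeight (G : SimpleGraph V) (w : Sym2 V → ℝ) : ℝ :=
  ∑ᶠ e ∈ G.edgeSet, w e

/-- The weight of a walk: the sum of the weights of its edges. -/
def walkWeight {G : SimpleGraph V} (w : Sym2 V → ℝ) {u v : V} (p : G.Walk u v) : ℝ :=
  (p.edges.map w).sum

/-- `dw G w u v` is the minimum over simple paths in `G` from `u` to `v` of the
sum of the weights of their edges. -/
noncomputable def dw (G : SimpleGraph V) (w : Sym2 V → ℝ) (u v : V) : ℝ :=
  sInf {r : ℝ | ∃ p : G.Walk u v, p.IsPath ∧ walkWeight w p = r}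

/-- The degree of a vertex: the number of edges incident to it. -/
noncomputable def deg (G : SimpleGraph V) (v : V) : ℕ :=
  (G.neighborSet v).ncard

/-- `ρ` is a pseudometric on the subset `M`: symmetric, nonnegative, vanishing
on the diagonal and satisfying the triangle inequality. -/
def IsPseudometricOn (M : Set V) (ρ : V → V → ℝ) : Prop :=
  (∀ p ∈ M, ∀ q ∈ M, ρ p q = ρ q p) ∧
  (∀ p ∈ M, ∀ q ∈ M, 0 ≤ ρ p q) ∧
  (∀ p ∈ M, ρ p p = 0) ∧
  (∀ p ∈ M, ∀ q ∈ M, ∀ r ∈ M, ρ p r ≤ ρ p q + ρ q r)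

/-- `(G, w)` is a generalized filling of `(M, ρ)` (with `M ⊆ V`): `G` is
connected (and joins `M`), and for all boundary points `p, q ∈ M` every simple
path in `G` from `p` to `q` has weight at least `ρ p q` (equivalently
`ρ p q ≤ d_w(p, q)`). -/
def IsGenFilling (G : SimpleGraph V) (w : Sym2 V → ℝ) (M : Set V) (ρ : V → V → ℝ) : Prop :=
  G.Connected ∧ ∀ p ∈ M, ∀ q ∈ M, ∀ γ : G.Walk p q, γ.IsPath → ρ p q ≤ walkWeight w γ


/-- `ρ` is a pseudometric on the finite set `M`. -/
def IsPseudometric {M : Type*} (ρ : M → M → ℝ) : Prop :=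
  (∀ p q, ρ p q = ρ q p) ∧ (∀ p q, 0 ≤ ρ p q) ∧ (∀ p, ρ p p = 0) ∧
    (∀ p q r, ρ p r ≤ ρ p q + ρ q r)

/-- `(G, w)` is a generalized filling of `(M, ρ)`, where the boundary `M` is
embedded into the vertex set via `ι`. -/
def IsGenFillingE {M V : Type*} (G : SimpleGraph V) (ι : M ↪ V) (w : Sym2 V → ℝ)
    (ρ : M → M → ℝ) : Prop :=
  G.Connected ∧ ∀ p q : M, ∀ γ : G.Walk (ι p) (ι q), γ.IsPath → ρ p q ≤ walkWeight w γ

/-- The type `G` is a tree in which every vertex of degree 1 is boundary. -/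
def GoodType {M V : Type*} (G : SimpleGraph V) (ι : M ↪ V) : Prop :=
  G.IsTree ∧ ∀ v : V, deg G v = 1 → v ∈ Set.range ι

/-- The generalized minimal filling weight `mf₋(M)`: the infimum of total
weight over all generalized fillings of `(M, ρ)` whose type is a tree in which
every vertex of degree 1 is boundary. -/
noncomputable def mfNeg (M : Type) [Fintype M] (ρ : M → M → ℝ) : ℝ :=
  sInf {r : ℝ | ∃ (V : Type) (_ : Fintype V) (G : SimpleGraph V) (ι : M ↪ V)
    (w : Sym2 V → ℝ),
      IsGenFillingE G ι w ρ ∧ GoodType G ι ∧ r = graphWeight G w}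

/-- The minimal filling weight `mf(M)`: the infimum of total weight over all
fillings of `(M, ρ)` (with nonnegative weight functions). -/
noncomputable def mf (M : Type) [Fintype M] (ρ : M → M → ℝ) : ℝ :=
  sInf {r : ℝ | ∃ (V : Type) (_ : Fintype V) (G : SimpleGraph V) (ι : M ↪ V)
    (w : Sym2 V → ℝ),
      IsGenFillingE G ι w ρ ∧ (∀ e ∈ G.edgeSet, 0 ≤ w e) ∧ r = graphWeight G w}

/-!
Summing the filling inequalities `ρ(π k, π (k + 1)) ≤ w(p k)` over a planar cyclic order counts
every edge weight exactly twice, which is the first claim.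

For positivity, planar cyclic orders ("tours") of the boundary are built by induction on the
tree. Remove a leaf `ℓ` with neighbour `u` and take a tour of the smaller tree whose boundary also
contains `u`; inserting `ℓ` right after `u`, or replacing `u` by `ℓ` when `u` is not a boundary
point, gives a tour of the whole tree, since either change adds the edge `uℓ` exactly twice to the
paths between consecutive entries. A tour rooted at `p` passes through `q`, so the triangle
inequality and the filling condition give
`2 ρ(p, q) ≤ Σ ρ(consecutive) ≤ Σ d_w(consecutive) = 2 w(𝒢)`. Taking `ρ(p, q) > 0` gives
`w(𝒢) > 0`; and since a star on `M` with a large constant weight is an admissible filling, the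
infimum `mf₋(M)` is taken over a nonempty set bounded below by `ρ(p, q)`.
-/

open SimpleGraph

lemma exists_append_singleton_eq_cons {α : Type*} {p : α → Prop} {C : List α} {r : α}
    (hC : ∀ x ∈ C, p x) (hr : p r) : ∃ c Q, C ++ [r] = c :: Q ∧ p c := by
  cases C with
  | nil => exact ⟨r, [], rfl, hr⟩
  | cons c Q => exact ⟨c, Q ++ [r], rfl, hC c (List.mem_cons_self ..)⟩

section ChainSum

variable {α β : Type*} [AddCommMonoid β] (f : α → α → β)

def chainSum : List α → β
  | [] => 0
  | [_] => 0
  | a :: b :: l => f a b + chainSum (b :: l)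

@[simp] lemma chainSum_nil : chainSum f [] = 0 := rfl

@[simp] lemma chainSum_singleton (a : α) : chainSum f [a] = 0 := rfl

@[simp] lemma chainSum_cons_cons (a b : α) (l : List α) :
    chainSum f (a :: b :: l) = f a b + chainSum f (b :: l) := rfl

lemma chainSum_append_cons (l : List α) (x : α) (l' : List α) :
    chainSum f (l ++ x :: l') = chainSum f (l ++ [x]) + chainSum f (x :: l') := by
  induction l with
  | nil => simp
  | cons a l ih =>
    cases l with
    | nil => cases l' <;> simp
    | cons b l =>
      simp only [List.cons_append, chainSum_cons_cons] at ih ⊢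
      rw [ih, add_assoc]

lemma chainSum_map {γ : Type*} (g : γ → α) (l : List γ) :
    chainSum f (l.map g) = chainSum (fun a b => f (g a) (g b)) l := by
  induction l with
  | nil => rfl
  | cons a l ih => cases l with
    | nil => rfl
    | cons b l => simp only [List.map_cons, chainSum_cons_cons] at ih ⊢; rw [ih]

lemma chainSum_replace {l l' : List α} {a c y y' : α} {d : β}
    (h : f a y' + f y' c = f a y + f y c + d) :
    chainSum f (l ++ a :: y' :: c :: l') = chainSum f (l ++ a :: y :: c :: l') + d := by
  rw [chainSum_append_cons, chainSum_append_cons f l a (y :: c :: l'), chainSum_cons_cons,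
    chainSum_cons_cons, chainSum_cons_cons, chainSum_cons_cons, ← add_assoc (f a y'), h]
  abel

lemma chainSum_dup {l l' : List α} {a : α} (h : f a a = 0) :
    chainSum f (l ++ a :: a :: l') = chainSum f (l ++ a :: l') := by
  rw [chainSum_append_cons, chainSum_append_cons f l a l', chainSum_cons_cons, h, zero_add]

end ChainSum

section ChainSumOrder

variable {α β : Type*} [AddCommMonoid β] [PartialOrder β] [IsOrderedAddMonoid β]

lemma chainSum_le_chainSum {f g : α → α → β} {l : List α}
    (h : ∀ a ∈ l, ∀ b ∈ l, f a b ≤ g a b) : chainSum f l ≤ chainSum g l := by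
  induction l with
  | nil => rfl
  | cons a l ih => cases l with
    | nil => rfl
    | cons b l =>
      simp only [chainSum_cons_cons]
      exact add_le_add (h a (by simp) b (by simp))
        (ih fun x hx y hy => h x (.tail _ hx) y (.tail _ hy))

lemma le_chainSum {f : α → α → β} (htri : ∀ a b c, f a c ≤ f a b + f b c) (a b : α)
    (l : List α) : f a b ≤ chainSum f (a :: l ++ [b]) := by
  induction l generalizing a with
  | nil => simp
  | cons c l ih => exact (htri a c b).trans (by simpa using add_le_add_right (ih c) (f a c))

lemma add_le_chainSum {f : α → α → β} (htri : ∀ a b c, f a c ≤ f a b + f b c) {a b : α}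
    {l : List α} (hb : b ∈ l) : f a b + f b a ≤ chainSum f (a :: l ++ [a]) := by
  obtain ⟨l₁, l₂, rfl⟩ := List.append_of_mem hb
  have hsplit : a :: (l₁ ++ b :: l₂) ++ [a] = (a :: l₁) ++ b :: (l₂ ++ [a]) := by simp
  rw [hsplit, chainSum_append_cons]
  exact add_le_add (le_chainSum htri a b l₁) (le_chainSum htri b a l₂)

end ChainSumOrder

section WalkWeight

variable {W : Type*} {G : SimpleGraph V} (w : Sym2 V → ℝ)

@[simp] lemma walkWeight_nil {u : V} : walkWeight w (Walk.nil : G.Walk u u) = 0 := rfl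

lemma walkWeight_concat {u v x : V} (p : G.Walk u v) (h : G.Adj v x) :
    walkWeight w (p.concat h) = walkWeight w p + w s(v, x) := by
  simp [walkWeight, Walk.edges_concat]

lemma walkWeight_reverse {u v : V} (p : G.Walk u v) : walkWeight w p.reverse = walkWeight w p := by
  simp [walkWeight, Walk.edges_reverse, List.sum_reverse]

lemma walkWeight_map {G' : SimpleGraph W} (φ : G →g G') (w : Sym2 W → ℝ) {u v : V}
    (p : G.Walk u v) : walkWeight w (p.map φ) = walkWeight (w ∘ Sym2.map φ) p := by
  simp [walkWeight, Walk.edges_map]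

lemma walkWeight_eq_sum_ite [DecidableEq V] {s : Finset (Sym2 V)} {u v : V} {p : G.Walk u v}
    (hp : p.IsTrail) (hs : ∀ e ∈ p.edges, e ∈ s) :
    walkWeight w p = ∑ e ∈ s, if e ∈ p.edges then w e else 0 := by
  rw [← Finset.sum_filter, walkWeight, ← List.sum_toFinset _ hp.edges_nodup]
  congr 1
  ext e
  simpa using hs e

lemma sum_walkWeight_eq_of_ncard_eq [Finite V] {K : Type*} [Fintype K] {a b : K → V}
    (p : ∀ k, G.Walk (a k) (b k)) (hp : ∀ k, (p k).IsTrail) {c : ℕ}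
    (hcover : ∀ e ∈ G.edgeSet, {k | e ∈ (p k).edges}.ncard = c) :
    ∑ k, walkWeight w (p k) = c * graphWeight G w := by
  classical
  have hE := G.edgeSet.toFinite
  rw [graphWeight, finsum_mem_eq_finite_toFinset_sum _ hE, Finset.mul_sum]
  simp_rw [walkWeight_eq_sum_ite w (hp _) fun e he =>
    hE.mem_toFinset.mpr (Walk.edges_subset_edgeSet _ he)]
  rw [Finset.sum_comm]
  refine Finset.sum_congr rfl fun e he => ?_
  rw [← Finset.sum_filter, Finset.sum_const, nsmul_eq_mul, ← hcover e (hE.mem_toFinset.mp he),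
    Set.ncard_eq_toFinset_card', Set.toFinset_ofPred]

end WalkWeight

section TreePath

variable {G : SimpleGraph V} (hT : G.IsTree)

noncomputable def treePath (a b : V) : G.Walk a b :=
  (hT.existsUnique_path a b).exists.choose

lemma isPath_treePath (a b : V) : (treePath hT a b).IsPath :=
  (hT.existsUnique_path a b).exists.choose_spec

lemma eq_treePath {a b : V} {p : G.Walk a b} (hp : p.IsPath) : p = treePath hT a b :=
  (hT.existsUnique_path a b).unique hp (isPath_treePath hT a b)

variable (w : Sym2 V → ℝ)
include hT

lemma dw_eq_walkWeight_treePath (a b : V) : dw G w a b = walkWeight w (treePath hT a b) := by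
  have : {r : ℝ | ∃ p : G.Walk a b, p.IsPath ∧ walkWeight w p = r} =
      {walkWeight w (treePath hT a b)} := by
    ext r
    exact ⟨fun ⟨p, hp, hr⟩ => hr ▸ eq_treePath hT hp ▸ rfl,
      fun hr => ⟨_, isPath_treePath hT a b, hr.symm⟩⟩
  rw [dw, this, csInf_singleton]

lemma dw_self (a : V) : dw G w a a = 0 := by
  rw [dw_eq_walkWeight_treePath hT, ← eq_treePath hT Walk.IsPath.nil, walkWeight_nil]

lemma dw_comm (a b : V) : dw G w a b = dw G w b a := by
  rw [dw_eq_walkWeight_treePath hT, dw_eq_walkWeight_treePath hT,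
    ← eq_treePath hT (isPath_treePath hT b a).reverse, walkWeight_reverse]

lemma dw_induce {s : Set V} (hs : (G.induce s).IsTree) (a b : s) :
    dw (G.induce s) (w ∘ Sym2.map Subtype.val) a b = dw G w a b := by
  have h : (treePath hs a b).map (Embedding.induce s).toHom = treePath hT a b :=
    eq_treePath hT ((isPath_treePath hs a b).map Subtype.val_injective)
  rw [dw_eq_walkWeight_treePath hs, dw_eq_walkWeight_treePath hT, ← h]
  exact (walkWeight_map (Embedding.induce s).toHom w (treePath hs a b)).symm

variable {ℓ u : V} (hℓ : G.neighborSet ℓ = {u})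
include hℓ

lemma dw_leaf {a : V} (ha : a ≠ ℓ) : dw G w a ℓ = dw G w a u + w s(u, ℓ) := by
  have hadj : G.Adj u ℓ := (show u ∈ G.neighborSet ℓ by simp [hℓ]).symm
  have hℓp : ℓ ∉ (treePath hT a u).support :=
    (isPath_treePath hT a u).isTrail.not_mem_support_of_subsingleton_neighborSet ha.symm hadj.ne'
      (by simp [hℓ])
  rw [dw_eq_walkWeight_treePath hT, dw_eq_walkWeight_treePath hT,
    ← eq_treePath hT ((isPath_treePath hT a u).concat hℓp hadj), walkWeight_concat]

lemma dw_add_dw_leaf {a c : V} (ha : a ≠ ℓ) (hc : c ≠ ℓ) :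
    dw G w a ℓ + dw G w ℓ c = dw G w a u + dw G w u c + 2 * w s(u, ℓ) := by
  rw [dw_comm hT w ℓ c, dw_comm hT w u c, dw_leaf hT w hℓ ha, dw_leaf hT w hℓ hc]
  ring

end TreePath

section LeafRemoval

variable {G : SimpleGraph V} {ℓ u : V} (hℓ : G.neighborSet ℓ = {u})
include hℓ

lemma isTree_induce_compl_leaf (hT : G.IsTree) : (G.induce {ℓ}ᶜ).IsTree := by
  have hu : u ∈ ({ℓ}ᶜ : Set V) := G.ne_of_adj (show u ∈ G.neighborSet ℓ by simp [hℓ]).symm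
  refine ⟨(connected_iff _).mpr ⟨hT.connected.preconnected.induce_of_degree_eq_one ?_, ⟨⟨u, hu⟩⟩⟩,
    hT.isAcyclic.induce _⟩
  intro v hv
  rw [Set.notMem_compl_iff, Set.mem_singleton_iff] at hv
  simp [hv, hℓ]

lemma edgeSet_eq_insert_image_induce_compl_leaf :
    G.edgeSet = insert s(u, ℓ) (Sym2.map Subtype.val '' (G.induce {ℓ}ᶜ).edgeSet) := by
  ext e
  induction e with
  | _ a b =>
    have hℓ' : ∀ x, G.Adj ℓ x ↔ x = u := fun x => Set.ext_iff.mp hℓ x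
    simp only [mem_edgeSet, Set.mem_insert_iff, Set.mem_image, Sym2.exists, Sym2.map_mk,
      comap_adj, Function.Embedding.subtype_apply, Subtype.exists, Set.mem_compl_iff,
      Set.mem_singleton_iff, Sym2.eq, Sym2.rel_iff', Prod.mk.injEq, Prod.swap_prod_mk]
    constructor
    · intro h
      by_cases ha : a = ℓ
      · exact .inl (.inr ⟨ha, (hℓ' b).mp (ha ▸ h)⟩)
      by_cases hb : b = ℓ
      · exact .inl (.inl ⟨(hℓ' a).mp (hb ▸ h.symm), hb⟩)
      exact .inr ⟨a, ha, b, hb, h, .inl ⟨rfl, rfl⟩⟩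
    · rintro ((⟨rfl, rfl⟩ | ⟨rfl, rfl⟩) | ⟨x, -, y, -, hxy, ⟨rfl, rfl⟩ | ⟨rfl, rfl⟩⟩)
      · exact ((hℓ' a).mpr rfl).symm
      · exact (hℓ' b).mpr rfl
      · exact hxy
      · exact hxy.symm

lemma graphWeight_eq_induce_compl_leaf [Finite V] (w : Sym2 V → ℝ) :
    graphWeight G w = graphWeight (G.induce {ℓ}ᶜ) (w ∘ Sym2.map Subtype.val) + w s(u, ℓ) := by
  have hnot : s(u, ℓ) ∉ Sym2.map Subtype.val '' (G.induce {ℓ}ᶜ).edgeSet := by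
    rintro ⟨e, -, he⟩
    have : ℓ ∈ Sym2.map Subtype.val e := he ▸ Sym2.mem_mk_right u ℓ
    obtain ⟨x, -, hx⟩ := Sym2.mem_map.mp this
    exact x.2 hx
  rw [graphWeight, edgeSet_eq_insert_image_induce_compl_leaf hℓ, finsum_mem_insert _ hnot
    (Set.toFinite _), finsum_mem_image (Sym2.map.injective Subtype.val_injective).injOn, add_comm]
  rfl

lemma deg_induce_compl_leaf {v : ({ℓ}ᶜ : Set V)} (hv : deg (G.induce {ℓ}ᶜ) v = 1) :
    (v : V) = u ∨ deg G v = 1 := by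
  by_cases hvℓ : G.Adj ℓ v
  · exact .inl (Set.ext_iff.mp hℓ v |>.mp hvℓ)
  refine .inr ?_
  have hsub : G.neighborSet v ⊆ Set.range ((↑) : ({ℓ}ᶜ : Set V) → V) := fun x hx =>
    ⟨⟨x, fun hx' => hvℓ (G.adj_symm (hx' ▸ hx))⟩, rfl⟩
  rwa [deg, neighborSet_induce, Set.ncard_preimage_of_injective_subset_range Subtype.val_injective
    hsub] at hv

end LeafRemoval

section Tour

variable {G : SimpleGraph V}

/-- A planar cyclic order of `B`, unrolled at `r`: `J` lists `B` without repetition starting at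
`r`, and the tree paths between cyclically consecutive entries cover every edge exactly twice. -/
structure IsTour (G : SimpleGraph V) (B : Set V) (r : V) (J : List V) : Prop where
  head?_eq : J.head? = some r
  nodup : J.Nodup
  mem_iff : ∀ x, x ∈ J ↔ x ∈ B
  chainSum_dw : ∀ w, chainSum (dw G w) (J ++ [r]) = 2 * graphWeight G w

lemma isTour_singleton [Subsingleton V] (hT : G.IsTree) {B : Set V} {r : V} (hr : r ∈ B) :
    IsTour G B r [r] := by
  have hE : G.edgeSet = ∅ := Set.eq_empty_of_forall_notMem fun e =>
    Sym2.ind (fun a b hab => G.ne_of_adj hab (Subsingleton.elim a b)) e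
  refine ⟨rfl, List.nodup_singleton r, fun x => ?_, fun w => ?_⟩
  · simpa [Subsingleton.elim x r] using hr
  · simp [dw_self hT, graphWeight, hE]

variable (hT : G.IsTree) {B : Set V} {ℓ u r : V} (hℓ : G.neighborSet ℓ = {u})
include hT hℓ

lemma chainSum_dw_through_leaf (w : Sym2 V → ℝ) {P Q : List V} {a c : V} (ha : a ≠ ℓ)
    (hc : c ≠ ℓ) : chainSum (dw G w) (P ++ a :: ℓ :: c :: Q) =
      chainSum (dw G w) (P ++ a :: u :: c :: Q) + 2 * w s(u, ℓ) :=
  chainSum_replace _ (dw_add_dw_leaf hT w hℓ ha hc)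

-- `A ++ u :: C` is a tour of `G` minus the leaf `ℓ`, for the boundary `B` with `ℓ` traded for `u`.
variable {A C : List V} (hℓB : ℓ ∈ B) (hhead : (A ++ u :: C).head? = some r)
  (hnodup : (A ++ u :: C).Nodup) (hmem : ∀ x, x ∈ A ++ u :: C ↔ x ≠ ℓ ∧ (x = u ∨ x ∈ B))
  (hsum : ∀ w, chainSum (dw G w) (A ++ u :: C ++ [r]) + 2 * w s(u, ℓ) = 2 * graphWeight G w)
include hℓB hhead hnodup hmem hsum

lemma isTour_insert_leaf (huB : u ∈ B) : IsTour G B r (A ++ u :: ℓ :: C) := by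
  have hne : ∀ x ∈ A ++ u :: C, x ≠ ℓ := fun x hx => ((hmem x).mp hx).1
  have hperm : (A ++ u :: ℓ :: C).Perm (ℓ :: (A ++ u :: C)) := by
    simpa using List.perm_middle (l₁ := A ++ [u]) (a := ℓ) (l₂ := C)
  obtain ⟨c, Q, hCQ, hc⟩ := exists_append_singleton_eq_cons (p := (· ≠ ℓ)) (C := C)
    (fun x hx => hne x (by simp [hx])) (hne r (List.mem_of_mem_head? hhead))
  refine ⟨by simpa [List.head?_append] using hhead,
    hperm.nodup_iff.mpr (List.nodup_cons.mpr ⟨fun h => hne ℓ h rfl, hnodup⟩), fun x => ?_,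
    fun w => ?_⟩
  · rw [hperm.mem_iff, List.mem_cons, hmem]
    by_cases hx : x = ℓ
    · simp [hx, hℓB]
    · simp only [hx, ne_eq, not_false_eq_true, true_and, false_or]
      exact ⟨fun h => h.elim (· ▸ huB) id, .inr⟩
  · calc chainSum (dw G w) (A ++ u :: ℓ :: C ++ [r])
        = chainSum (dw G w) (A ++ u :: ℓ :: c :: Q) := by simp [hCQ]
      _ = chainSum (dw G w) (A ++ u :: u :: c :: Q) + 2 * w s(u, ℓ) :=
          chainSum_dw_through_leaf hT hℓ w (hne u (by simp)) hc
      _ = chainSum (dw G w) (A ++ u :: C ++ [r]) + 2 * w s(u, ℓ) := by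
          rw [chainSum_dup _ (dw_self hT w u)]; simp [hCQ]
      _ = 2 * graphWeight G w := hsum w

lemma isTour_replace_by_leaf (hrB : r ∈ B) (huB : u ∉ B) : IsTour G B r (A ++ ℓ :: C) := by
  obtain ⟨A₀, a, hA⟩ : ∃ A₀ a, A = A₀ ++ [a] := by
    rcases List.eq_nil_or_concat A with rfl | ⟨A₀, a, rfl⟩
    · simp only [List.nil_append, List.head?_cons, Option.some.injEq] at hhead
      exact absurd (hhead ▸ hrB) huB
    · exact ⟨A₀, a, List.concat_eq_append⟩
  have hne : ∀ x ∈ A ++ u :: C, x ≠ ℓ := fun x hx => ((hmem x).mp hx).1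
  have hK := List.perm_middle (l₁ := A) (a := u) (l₂ := C)
  have hJ := List.perm_middle (l₁ := A) (a := ℓ) (l₂ := C)
  obtain ⟨huAC, hAC⟩ := List.nodup_cons.mp (hK.nodup_iff.mp hnodup)
  have hsub : ∀ x ∈ A ++ C, x ∈ A ++ u :: C := fun x hx => hK.mem_iff.mpr (.tail _ hx)
  obtain ⟨c, Q, hCQ, hc⟩ := exists_append_singleton_eq_cons (p := (· ≠ ℓ)) (C := C)
    (fun x hx => hne x (by simp [hx])) (hne r (List.mem_of_mem_head? hhead))
  refine ⟨by simpa [hA, List.head?_append] using hhead,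
    hJ.nodup_iff.mpr (List.nodup_cons.mpr ⟨fun h => hne ℓ (hsub ℓ h) rfl, hAC⟩), fun x => ?_,
    fun w => ?_⟩
  · rw [hJ.mem_iff, List.mem_cons]
    constructor
    · rintro (rfl | hx)
      · exact hℓB
      · exact ((hmem x).mp (hsub x hx)).2.resolve_left (by rintro rfl; exact huAC hx)
    · intro hx
      refine or_iff_not_imp_left.mpr fun hxℓ => ?_
      have := hK.mem_iff.mp ((hmem x).mpr ⟨hxℓ, .inr hx⟩)
      exact (List.mem_cons.mp this).resolve_left (by rintro rfl; exact huB hx)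
  calc chainSum (dw G w) (A ++ ℓ :: C ++ [r])
      = chainSum (dw G w) (A₀ ++ a :: ℓ :: c :: Q) := by simp [hA, hCQ]
    _ = chainSum (dw G w) (A₀ ++ a :: u :: c :: Q) + 2 * w s(u, ℓ) :=
        chainSum_dw_through_leaf hT hℓ w (hne a (by simp [hA])) hc
    _ = 2 * graphWeight G w := by rw [← hsum w]; simp [hA, hCQ]

end Tour

section TourExistence

variable {G : SimpleGraph V}

lemma IsTour.exists_of_induce_compl_leaf [Finite V] (hT : G.IsTree) {B : Set V} {ℓ u r : V}
    (hℓ : G.neighborSet ℓ = {u}) (hℓB : ℓ ∈ B) (hrB : r ∈ B) (hrℓ : r ≠ ℓ)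
    {J : List ({ℓ}ᶜ : Set V)}
    (hJ : IsTour (G.induce {ℓ}ᶜ) (Subtype.val ⁻¹' insert u B) ⟨r, hrℓ⟩ J) :
    ∃ J', IsTour G B r J' := by
  have hT' := isTree_induce_compl_leaf hℓ hT
  have hhead : (J.map Subtype.val).head? = some r := by rw [List.head?_map, hJ.head?_eq]; rfl
  have hnodup : (J.map Subtype.val).Nodup := hJ.nodup.map Subtype.val_injective
  have hmem : ∀ x, x ∈ J.map Subtype.val ↔ x ≠ ℓ ∧ (x = u ∨ x ∈ B) := fun x => by
    simp [hJ.mem_iff]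
  have hsum : ∀ w, chainSum (dw G w) (J.map Subtype.val ++ [r]) + 2 * w s(u, ℓ) =
      2 * graphWeight G w := fun w => by
    have hdw : (fun a b : ({ℓ}ᶜ : Set V) => dw G w a b) =
        dw (G.induce {ℓ}ᶜ) (w ∘ Sym2.map Subtype.val) := by
      funext a b
      exact (dw_induce hT w hT' a b).symm
    have hJr : J.map Subtype.val ++ [r] =
        (J ++ [(⟨r, hrℓ⟩ : ({ℓ}ᶜ : Set V))]).map Subtype.val := by simp
    rw [graphWeight_eq_induce_compl_leaf hℓ w, hJr, chainSum_map, hdw, hJ.chainSum_dw]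
    ring
  have hadj : G.Adj u ℓ := (show u ∈ G.neighborSet ℓ by simp [hℓ]).symm
  obtain ⟨A, C, hAC⟩ := List.append_of_mem ((hmem u).mpr ⟨G.ne_of_adj hadj, .inl rfl⟩)
  rw [hAC] at hhead hnodup hmem hsum
  by_cases huB : u ∈ B
  · exact ⟨_, isTour_insert_leaf hT hℓ hℓB hhead hnodup hmem hsum huB⟩
  · exact ⟨_, isTour_replace_by_leaf hT hℓ hℓB hhead hnodup hmem hsum hrB huB⟩

theorem exists_isTour [Finite V] (hT : G.IsTree) {B : Set V} (hB : ∀ v, deg G v = 1 → v ∈ B)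
    {r : V} (hr : r ∈ B) : ∃ J, IsTour G B r J := by
  induction hn : Nat.card V generalizing V with
  | zero => exact absurd hn (Nat.card_pos_iff.mpr ⟨⟨r⟩, ‹_›⟩).ne'
  | succ n ih =>
    rcases subsingleton_or_nontrivial V with hV | hV
    · exact ⟨[r], isTour_singleton hT hr⟩
    obtain ⟨ℓ, hℓ, hℓr⟩ : ∃ ℓ, deg G ℓ = 1 ∧ ℓ ≠ r := by
      classical
      have := Fintype.ofFinite V
      have hdeg : ∀ v, G.degree v = 1 → deg G v = 1 := fun v hv => by
        rwa [deg, Set.ncard_eq_toFinset_card']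
      obtain ⟨x, y, hxy, hx, hy⟩ := hT.exists_ne_and_degree_eq_one
      rcases eq_or_ne x r with rfl | hxr
      · exact ⟨y, hdeg y hy, hxy.symm⟩
      · exact ⟨x, hdeg x hx, hxr⟩
    obtain ⟨u, hu⟩ := Set.ncard_eq_one.mp hℓ
    have hcard : Nat.card ({ℓ}ᶜ : Set V) = n := by
      rw [Nat.card_coe_set_eq]
      exact Set.ncard_compl_of_ncard_eq_add _ (by rw [Set.ncard_singleton, hn])
    obtain ⟨J, hJ⟩ := ih (isTree_induce_compl_leaf hu hT) (B := Subtype.val ⁻¹' insert u B)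
      (fun v hv => (deg_induce_compl_leaf hu hv).imp id (hB v)) (r := ⟨r, hℓr.symm⟩) (.inr hr)
      hcard
    exact hJ.exists_of_induce_compl_leaf hT hu (hB ℓ hℓ) hr hℓr.symm

end TourExistence

section Filling

variable {M : Type*} {G : SimpleGraph V} {ι : M ↪ V} {w : Sym2 V → ℝ} {ρ : M → M → ℝ}

lemma IsGenFillingE.sum_le_two_mul_graphWeight [Finite V] (hfill : IsGenFillingE G ι w ρ)
    {K : Type*} [Fintype K] {a b : K → M} (p : ∀ k, G.Walk (ι (a k)) (ι (b k)))
    (hp : ∀ k, (p k).IsPath) (hcover : ∀ e ∈ G.edgeSet, {k | e ∈ (p k).edges}.ncard = 2) :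
    ∑ k, ρ (a k) (b k) ≤ 2 * graphWeight G w := by
  rw [← Nat.cast_two, ← sum_walkWeight_eq_of_ncard_eq w p (fun k => (hp k).isTrail) hcover]
  exact Finset.sum_le_sum fun k _ => hfill.2 _ _ _ (hp k)

lemma IsGenFillingE.le_dw (hfill : IsGenFillingE G ι w ρ) (hT : G.IsTree) (p q : M) :
    ρ p q ≤ dw G w (ι p) (ι q) := by
  rw [dw_eq_walkWeight_treePath hT]
  exact hfill.2 p q _ (isPath_treePath hT _ _)

theorem le_graphWeight [Finite V] (hρ : IsPseudometric ρ) (hfill : IsGenFillingE G ι w ρ)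
    (htype : GoodType G ι) {p q : M} (hpq : p ≠ q) : ρ p q ≤ graphWeight G w := by
  obtain ⟨J, hJ⟩ := exists_isTour htype.1 htype.2 (Set.mem_range_self p)
  obtain ⟨L, rfl⟩ : J ∈ Set.range (List.map ι) := by
    rw [Set.range_list_map]
    exact fun x hx => (hJ.mem_iff x).mp hx
  obtain ⟨L, rfl⟩ : ∃ L', L = p :: L' := by
    have h := hJ.head?_eq
    cases L with
    | nil => simp at h
    | cons a L' => exact ⟨L', by simpa using h⟩
  have hq : q ∈ L := by
    have h := (hJ.mem_iff (ι q)).mpr ⟨q, rfl⟩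
    simp only [List.map_cons, List.mem_cons, List.mem_map, EmbeddingLike.apply_eq_iff_eq,
      exists_eq_right] at h
    exact h.resolve_left (Ne.symm hpq)
  have hdw : chainSum ρ (p :: L ++ [p]) ≤ 2 * graphWeight G w :=
    calc chainSum ρ (p :: L ++ [p])
        ≤ chainSum (fun a b => dw G w (ι a) (ι b)) (p :: L ++ [p]) :=
          chainSum_le_chainSum fun a _ b _ => hfill.le_dw htype.1 a b
      _ = 2 * graphWeight G w := by rw [← chainSum_map, ← hJ.chainSum_dw w]; simp
  linarith [add_le_chainSum hρ.2.2.2 hq (f := ρ) (a := p), hρ.1 q p]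

lemma isGenFillingE_const (hG : G.Connected) {C : ℝ} (hρ : IsPseudometric ρ)
    (hC : ∀ p q, ρ p q ≤ C) : IsGenFillingE G ι (fun _ => C) ρ := by
  refine ⟨hG, fun p q γ _ => ?_⟩
  have hweight : walkWeight (fun _ => C) γ = γ.length * C := by
    simp [walkWeight, Walk.length_edges]
  rw [hweight]
  rcases Nat.eq_zero_or_pos γ.length with h | h
  · obtain rfl := ι.injective (Walk.eq_of_length_eq_zero h)
    simp [h, hρ.2.2.1]
  · nlinarith [hC p q, hρ.2.1 p q, (show (1 : ℝ) ≤ γ.length by exact_mod_cast h)]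

lemma le_mfNeg {M : Type} [Fintype M] {ρ : M → M → ℝ} (hρ : IsPseudometric ρ) {p q : M}
    (hpq : p ≠ q) : ρ p q ≤ mfNeg M ρ := by
  have hC : ∀ a b, ρ a b ≤ ∑ x, ∑ y, ρ x y := fun a b =>
    (Finset.single_le_sum (fun y _ => hρ.2.1 a y) (Finset.mem_univ b)).trans
      (Finset.single_le_sum (f := fun x => ∑ y, ρ x y)
        (fun x _ => Finset.sum_nonneg fun y _ => hρ.2.1 x y) (Finset.mem_univ a))
  refine le_csInf ⟨_, M, inferInstance, starGraph p, Function.Embedding.refl M, _,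
    isGenFillingE_const (connected_starGraph p) hρ hC, ⟨isTree_starGraph p, fun v _ => ⟨v, rfl⟩⟩,
    rfl⟩ ?_
  rintro _ ⟨V, _, G, ι, w, hfill, htype, rfl⟩
  exact le_graphWeight hρ hfill htype hpq

end Filling

/-- A generalized filling of a finite pseudometric space with
`ρ` not identically zero, whose type is a tree in which every vertex of
degree 1 is boundary, satisfies
`w(𝒢) ≥ (1/2) Σ ρ(π(k), π(k+1))` for every planar cyclic order `π`;
in particular `w(𝒢) > 0`, and hence `mf₋(M) > 0`. -/
theorem genFilling_weight_pos (M : Type) [Fintype M] (ρ : M → M → ℝ)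
    (hρ : IsPseudometric ρ) (hne : ∃ p q : M, ρ p q ≠ 0)
    {V : Type} [Fintype V] (G : SimpleGraph V) (ι : M ↪ V) (w : Sym2 V → ℝ)
    (hfill : IsGenFillingE G ι w ρ) (htype : GoodType G ι) :
    (∀ (π : ZMod (Fintype.card M) ≃ M)
        (p : (k : ZMod (Fintype.card M)) → G.Walk (ι (π k)) (ι (π (k + 1)))),
        (∀ k, (p k).IsPath) →
        (∀ e ∈ G.edgeSet, {k : ZMod (Fintype.card M) | e ∈ (p k).edges}.ncard = 2) →
        (1 / 2) * ∑ᶠ k : ZMod (Fintype.card M), ρ (π k) (π (k + 1)) ≤ graphWeight G w) ∧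
      0 < graphWeight G w ∧ 0 < mfNeg M ρ := by
  obtain ⟨p, q, hpq⟩ := hne
  have hp_ne_q : p ≠ q := by
    rintro rfl
    exact hpq (hρ.2.2.1 p)
  have hpos : 0 < ρ p q := (hρ.2.1 p q).lt_of_ne' hpq
  refine ⟨fun π γ hγ hcover => ?_, hpos.trans_le (le_graphWeight hρ hfill htype hp_ne_q),
    hpos.trans_le (le_mfNeg hρ hp_ne_q)⟩
  have : Nonempty M := ⟨p⟩
  have : NeZero (Fintype.card M) := ⟨Fintype.card_ne_zero⟩
  rw [finsum_eq_sum_of_fintype]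
  linarith [hfill.sum_le_two_mul_graphWeight γ hγ hcover]

end MinFill
end

section
/- Let (M,ρ) be a finite pseudometric space, G a finite tree joining M in which every vertex of degree 1 belongs to M, and 𝒢 = (G,w) a generalized minimal parametric filling of type G. Then every edge of G is contained in some exact path of 𝒢, i.e. a simple path whose endpoints x,y lie in M and whose weight equals ρ(x,y). -/
open scoped BigOperators

namespace MinFill

variable {V : Type*}

/-!
If no exact path passes through an edge `e`, then every simple path between boundary points
through `e` is strictly longer than the distance of its endpoints. There are finitely many such
paths, so a single `ε > 0` bounds all these slacks from below; lowering `w e` by `ε` keeps the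
filling property and lowers the total weight, contradicting minimality.
-/

open Function

theorem sum_update_of_mem_eq {ι A : Type*} [DecidableEq ι] [AddCommGroup A] {s : Finset ι}
    {i : ι} (h : i ∈ s) (f : ι → A) (b : A) :
    ∑ x ∈ s, update f i b x = ∑ x ∈ s, f x - f i + b := by
  rw [Finset.sum_update_of_mem h, Finset.sum_eq_add_sum_sdiff_singleton_of_mem h]
  abel

theorem exists_pos_le_of_finite {ι : Type*} [Finite ι] {f : ι → ℝ} (hf : ∀ i, 0 < f i) :
    ∃ ε > 0, ∀ i, ε ≤ f i := by
  cases isEmpty_or_nonempty ι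
  · exact ⟨1, one_pos, isEmptyElim⟩
  · obtain ⟨j, hj⟩ := Finite.exists_min f
    exact ⟨f j, hf j, hj⟩

section Update

variable [DecidableEq V] {G : SimpleGraph V} (w : Sym2 V → ℝ) {e : Sym2 V} (a : ℝ)

theorem walkWeight_update_of_mem {u v : V} {γ : G.Walk u v} (hγ : γ.IsPath)
    (he : e ∈ γ.edges) : walkWeight (update w e a) γ = walkWeight w γ - w e + a := by
  simp only [walkWeight, ← List.sum_toFinset _ hγ.edges_nodup]
  exact sum_update_of_mem_eq (List.mem_toFinset.2 he) w a

theorem walkWeight_update_of_not_mem {u v : V} {γ : G.Walk u v} (he : e ∉ γ.edges) :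
    walkWeight (update w e a) γ = walkWeight w γ := by
  unfold walkWeight
  congr 1
  exact List.map_congr_left fun f hf => update_of_ne (ne_of_mem_of_not_mem hf he) _ _

theorem graphWeight_update [Finite V] (he : e ∈ G.edgeSet) :
    graphWeight G (update w e a) = graphWeight G w - w e + a := by
  simp only [graphWeight, finsum_mem_eq_finite_toFinset_sum _ G.edgeSet.toFinite]
  exact sum_update_of_mem_eq (G.edgeSet.toFinite.mem_toFinset.2 he) w a

end Update

theorem IsGenFilling.update_sub [DecidableEq V] {G : SimpleGraph V} {M : Set V}
    {ρ : V → V → ℝ} {w : Sym2 V → ℝ} {e : Sym2 V} {ε : ℝ} (hfill : IsGenFilling G w M ρ)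
    (hslack : ∀ x ∈ M, ∀ y ∈ M, ∀ γ : G.Walk x y, γ.IsPath → e ∈ γ.edges →
      ρ x y + ε ≤ walkWeight w γ) :
    IsGenFilling G (update w e (w e - ε)) M ρ := by
  refine ⟨hfill.1, fun x hx y hy γ hγ => ?_⟩
  by_cases he : e ∈ γ.edges
  · rw [walkWeight_update_of_mem w _ hγ he]
    linarith [hslack x hx y hy γ hγ he]
  · rw [walkWeight_update_of_not_mem w _ he]
    exact hfill.2 x hx y hy γ hγ

theorem exists_uniform_slack [Finite V] {G : SimpleGraph V} {M : Set V} {ρ : V → V → ℝ}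
    {w : Sym2 V → ℝ} {e : Sym2 V}
    (hslack : ∀ x ∈ M, ∀ y ∈ M, ∀ γ : G.Walk x y, γ.IsPath → e ∈ γ.edges →
      ρ x y < walkWeight w γ) :
    ∃ ε > 0, ∀ x ∈ M, ∀ y ∈ M, ∀ γ : G.Walk x y, γ.IsPath → e ∈ γ.edges →
      ρ x y + ε ≤ walkWeight w γ := by
  classical
  have := Fintype.ofFinite V
  let Through := {s : Σ x y, G.Path x y // s.1 ∈ M ∧ s.2.1 ∈ M ∧ e ∈ s.2.2.1.edges}
  obtain ⟨ε, hε, hle⟩ := exists_pos_le_of_finite (ι := Through)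
    (f := fun s => walkWeight w s.1.2.2.1 - ρ s.1.1 s.1.2.1)
    fun ⟨⟨x, y, γ⟩, hx, hy, he⟩ => sub_pos.2 (hslack x hx y hy γ γ.2 he)
  refine ⟨ε, hε, fun x hx y hy γ hγ he => ?_⟩
  linarith [hle ⟨⟨x, y, γ, hγ⟩, hx, hy, he⟩]

theorem edge_mem_exact_path_general {V : Type*} [Fintype V] (G : SimpleGraph V) (M : Set V)
    (ρ : V → V → ℝ) (w : Sym2 V → ℝ)
    (hfill : IsGenFilling G w M ρ)
    (hmin : ∀ w' : Sym2 V → ℝ, IsGenFilling G w' M ρ →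
      graphWeight G w ≤ graphWeight G w') :
    ∀ e ∈ G.edgeSet, ∃ x ∈ M, ∃ y ∈ M, ∃ γ : G.Walk x y,
      γ.IsPath ∧ e ∈ γ.edges ∧ walkWeight w γ = ρ x y := by
  classical
  intro e he
  by_contra! hno
  obtain ⟨ε, hε, hslack⟩ := exists_uniform_slack fun x hx y hy γ hγ heγ =>
    (hfill.2 x hx y hy γ hγ).lt_of_ne (hno x hx y hy γ hγ heγ).symm
  have hle := hmin _ (hfill.update_sub hslack)
  rw [graphWeight_update w _ he] at hle
  linarith

/-- In a generalized minimal parametric filling of type `G`,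
every edge of `G` is contained in some exact path. -/
theorem edge_mem_exact_path {V : Type*} [Fintype V] (G : SimpleGraph V) (M : Set V)
    (ρ : V → V → ℝ) (hρ : IsPseudometricOn M ρ) (hG : G.IsTree)
    (hM : ∀ v : V, deg G v = 1 → v ∈ M) (w : Sym2 V → ℝ)
    (hfill : IsGenFilling G w M ρ)
    (hmin : ∀ w' : Sym2 V → ℝ, IsGenFilling G w' M ρ →
      graphWeight G w ≤ graphWeight G w') :
    ∀ e ∈ G.edgeSet, ∃ x ∈ M, ∃ y ∈ M, ∃ γ : G.Walk x y,
      γ.IsPath ∧ e ∈ γ.edges ∧ walkWeight w γ = ρ x y :=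
  edge_mem_exact_path_general G M ρ w hfill hmin

end MinFill
end

section
/- Let (M,ρ) be a finite pseudometric space, G a finite tree joining M in which every vertex of degree 1 belongs to M, and 𝒢 = (G,w) a generalized minimal parametric filling of type G. Let v be an interior vertex of G of degree 3. Then for any pair of edges of G incident to v there exists an exact path of 𝒢 containing both edges of the pair. -/
/-!
Suppose no exact path contains both `e₁` and `e₂`, and let `e₃` be the third edge at `v`.
A finite graph has only finitely many paths, so every path between boundary points through `e₁`
and `e₂` exceeds `ρ` of its endpoints by at least some `2ε > 0`. Lower `w` by `ε` on `e₁` and `e₂`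
and raise it by `ε` on `e₃`. A path between boundary points passes through the interior vertex `v`
along an even number of the edges at `v`, so if it uses exactly one of `e₁`, `e₂` it also uses
`e₃` and keeps its weight; if it uses both it loses at most its slack, and otherwise it gets no
lighter. The result is a generalized filling of weight `w(𝒢) - ε`, contradicting minimality.
-/

open scoped BigOperators

open Filter Topology

section

variable {V : Type*} {G : SimpleGraph V}

theorem Set.exists_eq_insert_pair_of_ncard_eq_three {α : Type*} {s : Set α} {a b : α}
    (hs : s.ncard = 3) (ha : a ∈ s) (hb : b ∈ s) (hab : a ≠ b) : ∃ c, s = {a, b, c} := by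
  have hsub : {a, b} ⊆ s := Set.insert_subset ha (Set.singleton_subset_iff.2 hb)
  obtain ⟨c, hc⟩ : ∃ c, s \ {a, b} = {c} := by
    rw [← Set.ncard_eq_one, Set.ncard_sdiff hsub, hs, Set.ncard_pair hab]
  refine ⟨c, ?_⟩
  rw [← Set.union_sdiff_cancel hsub, hc, Set.insert_union, Set.singleton_union]

/-- A trail passes through a vertex other than its endpoints along an even number of edges. -/
theorem SimpleGraph.Walk.IsTrail.exists_ne_mem_edges {x y v : V} {e : Sym2 V} {γ : G.Walk x y}
    (hγ : γ.IsTrail) (hx : x ≠ v) (hy : y ≠ v) (he : e ∈ γ.edges) (hv : v ∈ e) :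
    ∃ f ∈ γ.edges, f ≠ e ∧ v ∈ f := by
  classical
  by_contra! h
  have hcount : γ.edges.countP (v ∈ ·) = γ.edges.count e := by
    rw [List.count_eq_countP]
    refine List.countP_congr fun f hf => ?_
    simpa using ⟨fun hvf => by_contra fun hne => h f hf hne hvf, fun hfe => hfe ▸ hv⟩
  have heven := (hγ.even_countP_edges_iff v).2 fun _ => ⟨hx.symm, hy.symm⟩
  rw [hcount, List.count_eq_one_of_mem hγ.edges_nodup he] at heven
  exact Nat.not_even_one heven

theorem SimpleGraph.Walk.IsTrail.mem_edges_of_incidenceSet_eq {x y v : V} {e₁ e₂ e₃ : Sym2 V}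
    {γ : G.Walk x y} (hγ : γ.IsTrail) (hx : x ≠ v) (hy : y ≠ v)
    (hinc : G.incidenceSet v = {e₁, e₂, e₃}) (h₁ : e₁ ∈ γ.edges) (h₂ : e₂ ∉ γ.edges) :
    e₃ ∈ γ.edges := by
  have hv₁ : v ∈ e₁ := ((hinc ▸ Set.mem_insert e₁ _ : e₁ ∈ G.incidenceSet v)).2
  obtain ⟨f, hf, hfe₁, hvf⟩ := hγ.exists_ne_mem_edges hx hy h₁ hv₁
  have hf_inc : f ∈ G.incidenceSet v := ⟨γ.edges_subset_edgeSet hf, hvf⟩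
  rw [hinc] at hf_inc
  rcases hf_inc with rfl | rfl | rfl
  · exact absurd rfl hfe₁
  · exact absurd hf h₂
  · exact hf

theorem SimpleGraph.exists_pos_forall_isPath_le [Finite V] {P : ∀ x y : V, G.Walk x y → Prop}
    {f : ∀ x y : V, G.Walk x y → ℝ} (h : ∀ x y (γ : G.Walk x y), γ.IsPath → P x y γ → 0 < f x y γ) :
    ∃ ε > 0, ∀ x y (γ : G.Walk x y), γ.IsPath → P x y γ → ε ≤ f x y γ := by
  classical
  have := Fintype.ofFinite V
  have hev : ∀ᶠ ε in 𝓝[>] (0 : ℝ), ∀ γ : Σ x y, G.Path x y, P _ _ γ.2.2.1 → ε ≤ f _ _ γ.2.2.1 := by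
    refine Filter.eventually_all.2 ?_
    rintro ⟨x, y, γ⟩
    by_cases hP : P x y γ.1
    · exact ((eventually_le_nhds (h x y γ.1 γ.2 hP)).filter_mono nhdsWithin_le_nhds).mono
        fun _ hε _ => hε
    · exact .of_forall fun _ hP' => absurd hP' hP
  obtain ⟨ε, hε, hεpos⟩ := (hev.and self_mem_nhdsWithin).exists
  exact ⟨ε, hεpos, fun x y γ hγ hP => hε ⟨x, y, γ, hγ⟩ hP⟩

end

namespace MinFill

variable {V : Type*} {G : SimpleGraph V}

theorem ncard_incidenceSet_eq_deg (G : SimpleGraph V) (v : V) :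
    (G.incidenceSet v).ncard = deg G v := by
  classical exact Set.ncard_congr' (G.incidenceSetEquivNeighborSet v)

theorem walkWeight_add (w₁ w₂ : Sym2 V → ℝ) {x y : V} (γ : G.Walk x y) :
    walkWeight (w₁ + w₂) γ = walkWeight w₁ γ + walkWeight w₂ γ :=
  List.sum_map_add

theorem walkWeight_single_of_isTrail [DecidableEq (Sym2 V)] {x y : V}
    {γ : G.Walk x y} (hγ : γ.IsTrail) (e : Sym2 V) (c : ℝ) :
    walkWeight (Pi.single e c) γ = if e ∈ γ.edges then c else 0 := by
  rw [walkWeight, ← List.sum_toFinset _ hγ.edges_nodup, Finset.sum_pi_single']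
  simp only [List.mem_toFinset]

theorem graphWeight_add (hG : G.edgeSet.Finite) (w₁ w₂ : Sym2 V → ℝ) :
    graphWeight G (w₁ + w₂) = graphWeight G w₁ + graphWeight G w₂ :=
  finsum_mem_add_distrib hG

theorem graphWeight_single [DecidableEq (Sym2 V)] (hG : G.edgeSet.Finite) {e : Sym2 V}
    (he : e ∈ G.edgeSet) (c : ℝ) : graphWeight G (Pi.single e c) = c := by
  rw [graphWeight, finsum_mem_eq_finite_toFinset_sum _ hG, Finset.sum_pi_single',
    if_pos (hG.mem_toFinset.2 he)]

def shiftWeight [DecidableEq (Sym2 V)] (w : Sym2 V → ℝ) (e₁ e₂ e₃ : Sym2 V) (ε : ℝ) : Sym2 V → ℝ :=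
  w + Pi.single e₁ (-ε) + Pi.single e₂ (-ε) + Pi.single e₃ ε

theorem graphWeight_shiftWeight [DecidableEq (Sym2 V)] (hG : G.edgeSet.Finite)
    {e₁ e₂ e₃ : Sym2 V} (h₁ : e₁ ∈ G.edgeSet) (h₂ : e₂ ∈ G.edgeSet) (h₃ : e₃ ∈ G.edgeSet)
    (w : Sym2 V → ℝ) (ε : ℝ) :
    graphWeight G (shiftWeight w e₁ e₂ e₃ ε) = graphWeight G w - ε := by
  simp only [shiftWeight, graphWeight_add hG, graphWeight_single hG h₁, graphWeight_single hG h₂,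
    graphWeight_single hG h₃]
  ring

theorem walkWeight_shiftWeight_of_isTrail [DecidableEq (Sym2 V)] {x y : V} {γ : G.Walk x y}
    (hγ : γ.IsTrail) (w : Sym2 V → ℝ) (e₁ e₂ e₃ : Sym2 V) (ε : ℝ) :
    walkWeight (shiftWeight w e₁ e₂ e₃ ε) γ = walkWeight w γ - (if e₁ ∈ γ.edges then ε else 0)
      - (if e₂ ∈ γ.edges then ε else 0) + (if e₃ ∈ γ.edges then ε else 0) := by
  simp only [shiftWeight, walkWeight_add, walkWeight_single_of_isTrail hγ]
  split_ifs <;> ring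

theorem isGenFilling_shiftWeight [DecidableEq (Sym2 V)] {M : Set V} {ρ : V → V → ℝ}
    {w : Sym2 V → ℝ} {v : V} {e₁ e₂ e₃ : Sym2 V} {ε : ℝ} (hfill : IsGenFilling G w M ρ) (hv : v ∉ M)
    (hinc : G.incidenceSet v = {e₁, e₂, e₃}) (hε : 0 ≤ ε)
    (hslack : ∀ x ∈ M, ∀ y ∈ M, ∀ γ : G.Walk x y, γ.IsPath → e₁ ∈ γ.edges → e₂ ∈ γ.edges →
      ρ x y + 2 * ε ≤ walkWeight w γ) :
    IsGenFilling G (shiftWeight w e₁ e₂ e₃ ε) M ρ := by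
  refine ⟨hfill.1, fun x hx y hy γ hγ => ?_⟩
  have hρ := hfill.2 x hx y hy γ hγ
  have hxv : x ≠ v := ne_of_mem_of_not_mem hx hv
  have hyv : y ≠ v := ne_of_mem_of_not_mem hy hv
  have hinc' : G.incidenceSet v = {e₂, e₁, e₃} := by rw [hinc, Set.insert_comm]
  rw [walkWeight_shiftWeight_of_isTrail hγ.isTrail]
  by_cases h₁ : e₁ ∈ γ.edges <;> by_cases h₂ : e₂ ∈ γ.edges
  · have := hslack x hx y hy γ hγ h₁ h₂
    simp only [h₁, h₂, if_true]
    split_ifs <;> linarith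
  · simp [h₁, h₂, hγ.isTrail.mem_edges_of_incidenceSet_eq hxv hyv hinc h₁ h₂, hρ]
  · simp [h₁, h₂, hγ.isTrail.mem_edges_of_incidenceSet_eq hxv hyv hinc' h₂ h₁, hρ]
  · simp only [h₁, h₂, if_false]
    split_ifs <;> linarith

theorem deg_three_edges_mem_exact_path_general {V : Type*} [Fintype V] (G : SimpleGraph V)
    (M : Set V) (ρ : V → V → ℝ) (w : Sym2 V → ℝ)
    (hfill : IsGenFilling G w M ρ)
    (hmin : ∀ w' : Sym2 V → ℝ, IsGenFilling G w' M ρ →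
      graphWeight G w ≤ graphWeight G w')
    (v : V) (hv : v ∉ M) (hdeg : deg G v = 3) :
    ∀ e₁ ∈ G.edgeSet, ∀ e₂ ∈ G.edgeSet, e₁ ≠ e₂ → v ∈ e₁ → v ∈ e₂ →
      ∃ x ∈ M, ∃ y ∈ M, ∃ γ : G.Walk x y,
        γ.IsPath ∧ e₁ ∈ γ.edges ∧ e₂ ∈ γ.edges ∧ walkWeight w γ = ρ x y := by
  classical
  intro e₁ he₁ e₂ he₂ hne hv₁ hv₂
  by_contra! hexact
  obtain ⟨e₃, hinc⟩ := Set.exists_eq_insert_pair_of_ncard_eq_three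
    ((ncard_incidenceSet_eq_deg G v).trans hdeg) ⟨he₁, hv₁⟩ ⟨he₂, hv₂⟩ hne
  have he₃ : e₃ ∈ G.edgeSet := (hinc ▸ by simp : e₃ ∈ G.incidenceSet v).1
  obtain ⟨ε, hε, hslack⟩ := G.exists_pos_forall_isPath_le
    (P := fun x y γ => x ∈ M ∧ y ∈ M ∧ e₁ ∈ γ.edges ∧ e₂ ∈ γ.edges)
    (f := fun x y γ => walkWeight w γ - ρ x y) fun x y γ hγ ⟨hx, hy, h₁, h₂⟩ =>
      sub_pos.2 ((hfill.2 x hx y hy γ hγ).lt_of_ne (hexact x hx y hy γ hγ h₁ h₂).symm)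
  have hsmaller := hmin _ <| isGenFilling_shiftWeight hfill hv hinc (half_pos hε).le
    fun x hx y hy γ hγ h₁ h₂ => by linarith [hslack x y γ hγ ⟨hx, hy, h₁, h₂⟩]
  rw [graphWeight_shiftWeight (Set.toFinite _) he₁ he₂ he₃] at hsmaller
  linarith

/-- In a generalized minimal parametric filling, any pair of
edges incident to an interior vertex of degree 3 is contained in a common
exact path. -/
theorem deg_three_edges_mem_exact_path {V : Type*} [Fintype V] (G : SimpleGraph V)
    (M : Set V) (ρ : V → V → ℝ) (hρ : IsPseudometricOn M ρ) (hG : G.IsTree)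
    (hM : ∀ v : V, deg G v = 1 → v ∈ M) (w : Sym2 V → ℝ)
    (hfill : IsGenFilling G w M ρ)
    (hmin : ∀ w' : Sym2 V → ℝ, IsGenFilling G w' M ρ →
      graphWeight G w ≤ graphWeight G w')
    (v : V) (hv : v ∉ M) (hdeg : deg G v = 3) :
    ∀ e₁ ∈ G.edgeSet, ∀ e₂ ∈ G.edgeSet, e₁ ≠ e₂ → v ∈ e₁ → v ∈ e₂ →
      ∃ x ∈ M, ∃ y ∈ M, ∃ γ : G.Walk x y,
        γ.IsPath ∧ e₁ ∈ γ.edges ∧ e₂ ∈ γ.edges ∧ walkWeight w γ = ρ x y :=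
  deg_three_edges_mem_exact_path_general G M ρ w hfill hmin v hv hdeg

end MinFill
end

section
/- Let (M,ρ) be a finite pseudometric space, G a finite tree joining M in which every vertex of degree 1 belongs to M, and 𝒢 = (G,w) a generalized minimal parametric filling of type G. Let v be an interior vertex of G and S a set of m edges of G incident to v with m > deg(v)/2. Then there exist two distinct edges in S and an exact path of 𝒢 containing both of them. -/
open scoped BigOperators

theorem List.Nodup.exists_ne_of_one_lt_countP {α : Type*} {p : α → Bool} {l : List α}
    (hl : l.Nodup) (h : 1 < l.countP p) : ∃ a ∈ l, ∃ b ∈ l, a ≠ b ∧ p a ∧ p b := by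
  classical
  rw [List.countP_eq_length_filter, ← List.toFinset_card_of_nodup (hl.filter p)] at h
  obtain ⟨a, b, ha, hb, hab⟩ := Finset.one_lt_card_iff.1 h
  simp only [List.mem_toFinset, List.mem_filter] at ha hb
  exact ⟨a, ha.1, b, hb.1, hab, ha.2, hb.2⟩

theorem Finite.exists_pos_le_of_pos {ι : Type*} [Finite ι] (f : ι → ℝ) :
    ∃ ε > 0, ∀ i, 0 < f i → ε ≤ f i := by
  cases isEmpty_or_nonempty ι
  · exact ⟨1, one_pos, fun i => isEmptyElim i⟩
  · obtain ⟨i₀, hi₀⟩ := Finite.exists_min fun i => if 0 < f i then f i else 1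
    refine ⟨_, by split_ifs <;> simp_all, fun i hi => (hi₀ i).trans_eq (if_pos hi)⟩

namespace SimpleGraph.Walk

variable {V : Type*} {G : SimpleGraph V} [DecidableEq V]

theorem IsPath.countP_mem_edges_start_eq_one {u v : V} {p : G.Walk u v} (hp : p.IsPath)
    (huv : u ≠ v) : p.edges.countP (u ∈ ·) = 1 := by
  cases p with
  | nil => exact absurd rfl huv
  | cons h q =>
    have hu : u ∉ q.support := ((cons_isPath_iff h q).1 hp).2
    rw [edges_cons, List.countP_cons_of_pos (by simp),
      List.countP_eq_zero.2 fun e he hue => hu (q.mem_support_of_mem_edges he (by simpa using hue))]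

theorem IsPath.countP_mem_edges_end_eq_one {u v : V} {p : G.Walk u v} (hp : p.IsPath)
    (huv : u ≠ v) : p.edges.countP (v ∈ ·) = 1 := by
  simpa [edges_reverse] using hp.reverse.countP_mem_edges_start_eq_one huv.symm

theorem IsPath.countP_mem_edges_eq_two {u v x : V} {p : G.Walk u v} (hp : p.IsPath)
    (hx : x ∈ p.support) (hxu : x ≠ u) (hxv : x ≠ v) : p.edges.countP (x ∈ ·) = 2 := by
  rw [← p.take_spec hx, edges_append, List.countP_append,
    (hp.takeUntil hx).countP_mem_edges_end_eq_one hxu.symm,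
    (hp.dropUntil hx).countP_mem_edges_start_eq_one hxv]

end SimpleGraph.Walk

namespace MinFill

open SimpleGraph

variable {V : Type*} {G : SimpleGraph V}

theorem walkWeight_add_smul (w f : Sym2 V → ℝ) (c : ℝ) {u v : V} (γ : G.Walk u v) :
    walkWeight (w + c • f) γ = walkWeight w γ + c * walkWeight f γ := by
  show (γ.edges.map fun e => w e + c * f e).sum = _
  rw [List.sum_map_add, List.sum_map_mul_left]
  rfl

theorem graphWeight_eq_sum [Fintype G.edgeSet] (w : Sym2 V → ℝ) :
    graphWeight G w = ∑ e ∈ G.edgeFinset, w e := by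
  rw [graphWeight, ← coe_edgeFinset, finsum_mem_coe_finset]

theorem graphWeight_add_smul [Finite V] (w f : Sym2 V → ℝ) (c : ℝ) :
    graphWeight G (w + c • f) = graphWeight G w + c * graphWeight G f := by
  classical
  cases nonempty_fintype V
  simp only [graphWeight_eq_sum, Pi.add_apply, Pi.smul_apply, smul_eq_mul,
    Finset.sum_add_distrib, Finset.mul_sum]

theorem deg_eq_degree (v : V) [Fintype (G.neighborSet v)] : deg G v = G.degree v := by
  rw [deg, ← Nat.card_coe_set_eq, Nat.card_eq_fintype_card, card_neighborSet_eq_degree]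

theorem exists_pos_le_slack [Finite V] (w : Sym2 V → ℝ) (ρ : V → V → ℝ) :
    ∃ ε > 0, ∀ {p q : V} (γ : G.Walk p q), γ.IsPath →
      ρ p q < walkWeight w γ → ε ≤ walkWeight w γ - ρ p q := by
  classical
  cases nonempty_fintype V
  obtain ⟨ε, hε, hle⟩ := Finite.exists_pos_le_of_pos
    fun γ : Σ pq : V × V, G.Path pq.1 pq.2 => walkWeight w γ.2.1 - ρ γ.1.1 γ.1.2
  exact ⟨ε, hε, fun γ hγ hlt => hle ⟨(_, _), γ, hγ⟩ (sub_pos.2 hlt)⟩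

variable [DecidableEq V]

/-- Equal to `-1` on the edges of `S` and `1` on the other edges at `v` when every edge of `S`
contains `v`. -/
def starShift (v : V) (S : Finset (Sym2 V)) (e : Sym2 V) : ℝ :=
  (if v ∈ e then 1 else 0) - 2 * (if e ∈ S then 1 else 0)

theorem walkWeight_starShift (v : V) (S : Finset (Sym2 V)) {p q : V} (γ : G.Walk p q) :
    walkWeight (starShift v S) γ =
      γ.edges.countP (v ∈ ·) - 2 * γ.edges.countP (· ∈ S) := by
  simp only [walkWeight]
  induction γ.edges with
  | nil => simp
  | cons e l ih =>
    simp only [List.map_cons, List.sum_cons, List.countP_cons, decide_eq_true_eq, ih, starShift]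
    push_cast
    split_ifs <;> ring

theorem graphWeight_starShift [Fintype V] {v : V} {S : Finset (Sym2 V)}
    (hS : ∀ e ∈ S, e ∈ G.edgeSet ∧ v ∈ e) :
    graphWeight G (starShift v S) = deg G v - 2 * S.card := by
  classical
  rw [graphWeight_eq_sum, deg_eq_degree, ← card_incidenceFinset_eq_degree,
    incidenceFinset_eq_filter]
  simp only [starShift, Finset.sum_sub_distrib, ← Finset.mul_sum, Finset.sum_boole]
  rw [Finset.filter_mem_eq_inter, Finset.inter_eq_right.2 fun e he => mem_edgeFinset.2 (hS e he).1]

theorem IsGenFilling.add_smul_starShift {w : Sym2 V → ℝ} {M : Set V} {ρ : V → V → ℝ}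
    (hfill : IsGenFilling G w M ρ) {v : V} (hv : v ∉ M) {S : Finset (Sym2 V)}
    (hSv : ∀ e ∈ S, v ∈ e) {ε : ℝ} (hε : 0 ≤ ε)
    (hslack : ∀ p ∈ M, ∀ q ∈ M, ∀ γ : G.Walk p q, γ.IsPath → ∀ e₁ ∈ S, ∀ e₂ ∈ S, e₁ ≠ e₂ →
      e₁ ∈ γ.edges → e₂ ∈ γ.edges → ρ p q + 2 * ε ≤ walkWeight w γ) :
    IsGenFilling G (w + ε • starShift v S) M ρ := by
  refine ⟨hfill.1, fun p hp q hq γ hγ => ?_⟩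
  have hbase := hfill.2 p hp q hq γ hγ
  rw [walkWeight_add_smul, walkWeight_starShift]
  set k := γ.edges.countP (· ∈ S)
  rcases Nat.eq_zero_or_pos k with hk | hk
  · rw [hk]
    have := mul_nonneg hε (Nat.cast_nonneg (α := ℝ) (γ.edges.countP (v ∈ ·)))
    push_cast
    linarith
  obtain ⟨e, he, heS⟩ := List.countP_pos_iff.1 hk
  have hi : γ.edges.countP (v ∈ ·) = 2 :=
    hγ.countP_mem_edges_eq_two (γ.mem_support_of_mem_edges he (hSv e (by simpa using heS)))
      (ne_of_mem_of_not_mem hp hv).symm (ne_of_mem_of_not_mem hq hv).symm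
  have hki : k ≤ 2 :=
    hi ▸ List.countP_mono_left fun e _ heS => by simpa using hSv e (by simpa using heS)
  rw [hi]
  rcases (by omega : k = 1 ∨ k = 2) with hk1 | hk2
  · rw [hk1]
    push_cast
    linarith
  · obtain ⟨e₁, he₁, e₂, he₂, hne, hS₁, hS₂⟩ :=
      hγ.edges_nodup.exists_ne_of_one_lt_countP (p := (· ∈ S)) (by omega)
    have := hslack p hp q hq γ hγ e₁ (by simpa using hS₁) e₂ (by simpa using hS₂) hne he₁ he₂
    rw [hk2]
    push_cast
    linarith

theorem many_edges_mem_exact_path_general {V : Type*} [Fintype V] (G : SimpleGraph V)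
    (M : Set V) (ρ : V → V → ℝ) (w : Sym2 V → ℝ)
    (hfill : IsGenFilling G w M ρ)
    (hmin : ∀ w' : Sym2 V → ℝ, IsGenFilling G w' M ρ →
      graphWeight G w ≤ graphWeight G w')
    (v : V) (hv : v ∉ M) (S : Finset (Sym2 V))
    (hS : ∀ e ∈ S, e ∈ G.edgeSet ∧ v ∈ e) (hm : deg G v < 2 * S.card) :
    ∃ e₁ ∈ S, ∃ e₂ ∈ S, e₁ ≠ e₂ ∧
      ∃ x ∈ M, ∃ y ∈ M, ∃ γ : G.Walk x y,
        γ.IsPath ∧ e₁ ∈ γ.edges ∧ e₂ ∈ γ.edges ∧ walkWeight w γ = ρ x y := by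
  classical
  by_contra! hnone
  obtain ⟨ε, hε, hslack⟩ := exists_pos_le_slack (G := G) w ρ
  have hfill' : IsGenFilling G (w + (ε / 2) • starShift v S) M ρ :=
    hfill.add_smul_starShift hv (fun e he => (hS e he).2) (half_pos hε).le
      fun p hp q hq γ hγ e₁ he₁ e₂ he₂ hne h₁ h₂ => by
        have hexact := hnone e₁ he₁ e₂ he₂ hne p hp q hq γ hγ h₁ h₂
        have := hslack γ hγ ((hfill.2 p hp q hq γ hγ).lt_of_ne hexact.symm)
        linarith
  have hlt : graphWeight G (w + (ε / 2) • starShift v S) < graphWeight G w := by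
    have hm' : (deg G v : ℝ) < 2 * S.card := by exact_mod_cast hm
    rw [graphWeight_add_smul, graphWeight_starShift hS]
    nlinarith
  exact (hmin _ hfill').not_gt hlt

/-- In a generalized minimal parametric filling, if `S` is a
set of `m > deg(v)/2` edges incident to an interior vertex `v`, then some two
distinct edges of `S` are contained in a common exact path. -/
theorem many_edges_mem_exact_path {V : Type*} [Fintype V] (G : SimpleGraph V)
    (M : Set V) (ρ : V → V → ℝ) (hρ : IsPseudometricOn M ρ) (hG : G.IsTree)
    (hM : ∀ v : V, deg G v = 1 → v ∈ M) (w : Sym2 V → ℝ)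
    (hfill : IsGenFilling G w M ρ)
    (hmin : ∀ w' : Sym2 V → ℝ, IsGenFilling G w' M ρ →
      graphWeight G w ≤ graphWeight G w')
    (v : V) (hv : v ∉ M) (S : Finset (Sym2 V))
    (hS : ∀ e ∈ S, e ∈ G.edgeSet ∧ v ∈ e) (hm : deg G v < 2 * S.card) :
    ∃ e₁ ∈ S, ∃ e₂ ∈ S, e₁ ≠ e₂ ∧
      ∃ x ∈ M, ∃ y ∈ M, ∃ γ : G.Walk x y,
        γ.IsPath ∧ e₁ ∈ γ.edges ∧ e₂ ∈ γ.edges ∧ walkWeight w γ = ρ x y :=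
  many_edges_mem_exact_path_general G M ρ w hfill hmin v hv S hS hm

end MinFill
end

section
/- Let 𝒢 = (G,w) be a generalized filling of a finite pseudometric space (M,ρ) whose type G = (V,E) is a tree, let X,Y be adjacent interior vertices of degree 3 with w(XY) = −2e < 0, let A,B be the neighbours of X other than Y and C,D the neighbours of Y other than X, and let (G',w') be the modified graph: E' = (E ∖ {XB, YD}) ∪ {XD, YB}, w'(XY) = 2e, w'(XA) = w(XA) − e, w'(YB) = w(XB) − e, w'(YC) = w(YC) − e, w'(XD) = w(YD) − e, w' = w elsewhere. If u,v ∈ M are such that the unique path in G from u to v contains the edge sequence AX, XY, YC (or symmetrically BX, XY, YD), then d_{w'}(u,v) > d_w(u,v). -/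
/-!
In a tree the distance `dw` between two vertices is the weight of the unique path joining them.
Swapping the edges `XB`, `YD` for `XD`, `YB` keeps the graph a tree: a tree has no triangles, so
the two new edges are really new, and `G'` stays connected with as many edges as `G`.
The `u`–`v` path of `G'` runs through the same vertices as that of `G`, except that a segment
`B X Y D` becomes `B Y X D`. Its edges outside the segment through `X` and `Y` avoid both, so they
survive in `G'` with their weights, while the new weights make that segment heavier by `2e`.
-/

open scoped BigOperators

namespace SimpleGraph.Walk

variable {V : Type*} {G : SimpleGraph V}

lemma exists_eq_append_cons_of_mem_edges {u v x y : V} (p : G.Walk u v)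
    (h : s(x, y) ∈ p.edges) :
    (∃ (q : G.Walk u x) (hxy : G.Adj x y) (r : G.Walk y v), p = q.append (cons hxy r)) ∨
      ∃ (q : G.Walk u y) (hyx : G.Adj y x) (r : G.Walk x v), p = q.append (cons hyx r) := by
  induction p with
  | nil => simp at h
  | @cons u z v huz p ih =>
    rw [edges_cons, List.mem_cons] at h
    rcases h with h | h
    · rcases Sym2.eq_iff.mp h with ⟨rfl, rfl⟩ | ⟨rfl, rfl⟩
      · exact .inl ⟨nil, huz, p, rfl⟩
      · exact .inr ⟨nil, huz, p, rfl⟩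
    · rcases ih h with ⟨q, hxy, r, rfl⟩ | ⟨q, hyx, r, rfl⟩
      · exact .inl ⟨cons huz q, hxy, r, rfl⟩
      · exact .inr ⟨cons huz q, hyx, r, rfl⟩

lemma IsPath.exists_eq_cons_of_mem_edges {y v d : V} {r : G.Walk y v} (hr : r.IsPath)
    (hd : s(y, d) ∈ r.edges) : ∃ (h : G.Adj y d) (r' : G.Walk d v), r = cons h r' := by
  cases r with
  | nil => simp at hd
  | cons h r' =>
    rw [edges_cons, List.mem_cons] at hd
    rcases hd with hd | hd
    · obtain rfl := Sym2.congr_right.mp hd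
      exact ⟨h, r', rfl⟩
    · exact absurd (r'.fst_mem_support_of_mem_edges hd) ((cons_isPath_iff h r').mp hr).2

lemma IsPath.exists_eq_concat_of_mem_edges {u x a : V} {q : G.Walk u x} (hq : q.IsPath)
    (ha : s(a, x) ∈ q.edges) : ∃ (q' : G.Walk u a) (h : G.Adj a x), q = q'.concat h := by
  obtain ⟨h, q', hq'⟩ := hq.reverse.exists_eq_cons_of_mem_edges (d := a)
    (by rwa [edges_reverse, List.mem_reverse, Sym2.eq_swap])
  refine ⟨q'.reverse, h.symm, ?_⟩
  rw [← reverse_reverse q, hq', reverse_cons, concat_eq_append]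

lemma IsPath.mem_edges_left_of_mem_edges_append_cons {u v a x y : V} {q : G.Walk u x}
    {hxy : G.Adj x y} {r : G.Walk y v} (hp : (q.append (cons hxy r)).IsPath)
    (ha : s(a, x) ∈ (q.append (cons hxy r)).edges) (hay : a ≠ y) : s(a, x) ∈ q.edges := by
  rw [edges_append, edges_cons, List.mem_append, List.mem_cons] at ha
  rcases ha with ha | ha | ha
  · exact ha
  · rcases Sym2.eq_iff.mp ha with ⟨-, h⟩ | ⟨h, -⟩
    exacts [absurd h hxy.ne, absurd h hay]
  · exact absurd (r.snd_mem_support_of_mem_edges ha)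
      ((cons_isPath_iff hxy r).mp hp.of_append_right).2

lemma IsPath.exists_eq_append_cons_cons_cons {u v a x y d : V} {q : G.Walk u x}
    {hxy : G.Adj x y} {r : G.Walk y v} (hp : (q.append (cons hxy r)).IsPath)
    (ha : s(a, x) ∈ (q.append (cons hxy r)).edges) (hay : a ≠ y)
    (hd : s(y, d) ∈ (q.append (cons hxy r)).edges) (hdx : d ≠ x) :
    ∃ (q' : G.Walk u a) (hax : G.Adj a x) (hyd : G.Adj y d) (r' : G.Walk d v),
      q.append (cons hxy r) = q'.append (cons hax (cons hxy (cons hyd r'))) := by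
  have hrev : (q.append (cons hxy r)).reverse = r.reverse.append (cons hxy.symm q.reverse) := by
    rw [reverse_append, reverse_cons, ← append_assoc, cons_append, nil_append]
  have hp' := hrev ▸ hp.reverse
  have hd' : s(d, y) ∈ r.reverse.edges := hp'.mem_edges_left_of_mem_edges_append_cons
    (by rwa [← hrev, edges_reverse, List.mem_reverse, Sym2.eq_swap]) hdx
  obtain ⟨hyd, r', rfl⟩ := hp.of_append_right.of_cons.exists_eq_cons_of_mem_edges
    (by rwa [edges_reverse, List.mem_reverse, Sym2.eq_swap] at hd')
  obtain ⟨q', hax, rfl⟩ := hp.of_append_left.exists_eq_concat_of_mem_edges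
    (hp.mem_edges_left_of_mem_edges_append_cons ha hay)
  exact ⟨q', hax, hyd, r', concat_append _ _ _⟩

end SimpleGraph.Walk

namespace MinFill

open SimpleGraph SimpleGraph.Walk

variable {V : Type*}

section WalkWeight

variable {G : SimpleGraph V} (w : Sym2 V → ℝ)

@[simp]
lemma walkWeight_cons {u v x : V} (h : G.Adj u v) (p : G.Walk v x) :
    walkWeight w (Walk.cons h p) = w s(u, v) + walkWeight w p := by
  simp [walkWeight]

@[simp]
lemma walkWeight_append {u v x : V} (p : G.Walk u v) (q : G.Walk v x) :
    walkWeight w (p.append q) = walkWeight w p + walkWeight w q := by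
  simp [walkWeight]

lemma walkWeight_transfer {H : SimpleGraph V} {w' : Sym2 V → ℝ} {u v : V} (p : G.Walk u v)
    (hp : ∀ f ∈ p.edges, f ∈ H.edgeSet) (hw : ∀ f ∈ p.edges, w' f = w f) :
    walkWeight w' (p.transfer H hp) = walkWeight w p := by
  rw [walkWeight, walkWeight, Walk.edges_transfer, List.map_congr_left hw]

lemma dw_eq_walkWeight_of_isTree (hG : G.IsTree) {u v : V} {p : G.Walk u v} (hp : p.IsPath) :
    dw G w u v = walkWeight w p := by
  obtain ⟨q, -, hq⟩ := hG.existsUnique_path u v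
  have : {r | ∃ p : G.Walk u v, p.IsPath ∧ walkWeight w p = r} = {walkWeight w p} := by
    ext r
    constructor
    · rintro ⟨p', hp', rfl⟩
      rw [hq p' hp', hq p hp]
      rfl
    · rintro rfl
      exact ⟨p, hp, rfl⟩
  rw [dw, this, csInf_singleton]

end WalkWeight

def edgeSwap (G : SimpleGraph V) (X Y B D : V) : SimpleGraph V :=
  fromEdgeSet ((G.edgeSet \ {s(X, B), s(Y, D)}) ∪ {s(X, D), s(Y, B)})

section EdgeSwap

variable {G : SimpleGraph V} {X Y B D : V}

lemma edgeSwap_adj_of_adj {a b : V} (hab : G.Adj a b) (hB : s(a, b) ≠ s(X, B))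
    (hD : s(a, b) ≠ s(Y, D)) : (edgeSwap G X Y B D).Adj a b := by
  rw [edgeSwap, fromEdgeSet_adj]
  exact ⟨.inl ⟨hab, by simp [hB, hD]⟩, hab.ne⟩

lemma edgeSwap_adj_left (h : X ≠ D) : (edgeSwap G X Y B D).Adj X D := by
  rw [edgeSwap, fromEdgeSet_adj]
  exact ⟨.inr (by simp), h⟩

lemma edgeSwap_adj_right (h : Y ≠ B) : (edgeSwap G X Y B D).Adj Y B := by
  rw [edgeSwap, fromEdgeSet_adj]
  exact ⟨.inr (by simp), h⟩

lemma mem_edgeSet_edgeSwap {f : Sym2 V} (hf : f ∈ G.edgeSet) (hX : X ∉ f) (hY : Y ∉ f) :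
    f ∈ (edgeSwap G X Y B D).edgeSet := by
  induction f with
  | h a b =>
    refine edgeSwap_adj_of_adj hf (fun h => hX ?_) (fun h => hY ?_) <;> simp [h]

lemma connected_edgeSwap (hG : G.Connected) (hXY : G.Adj X Y) (hBY : B ≠ Y) (hDX : D ≠ X) :
    (edgeSwap G X Y B D).Connected := by
  have hXY' : (edgeSwap G X Y B D).Adj X Y :=
    edgeSwap_adj_of_adj hXY (by simp [hBY.symm, hXY.ne']) (by simp [hXY.ne, hDX.symm])
  have hXB : (edgeSwap G X Y B D).Reachable X B :=
    hXY'.reachable.trans (edgeSwap_adj_right hBY.symm).reachable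
  have hYD : (edgeSwap G X Y B D).Reachable Y D :=
    hXY'.symm.reachable.trans (edgeSwap_adj_left hDX.symm).reachable
  have hadj {a b : V} (hab : G.Adj a b) : (edgeSwap G X Y B D).Reachable a b := by
    by_cases hB : s(a, b) = s(X, B)
    · rcases Sym2.eq_iff.mp hB with ⟨rfl, rfl⟩ | ⟨rfl, rfl⟩
      exacts [hXB, hXB.symm]
    by_cases hD : s(a, b) = s(Y, D)
    · rcases Sym2.eq_iff.mp hD with ⟨rfl, rfl⟩ | ⟨rfl, rfl⟩
      exacts [hYD, hYD.symm]
    exact (edgeSwap_adj_of_adj hab hB hD).reachable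
  have := hG.nonempty
  refine ⟨fun a b => ?_⟩
  obtain ⟨p⟩ := hG.preconnected a b
  induction p with
  | nil => rfl
  | cons h _ ih => exact (hadj h).trans ih

theorem isTree_edgeSwap [Finite V] (hG : G.IsTree) (hXY : G.Adj X Y) (hXB : G.Adj X B)
    (hYD : G.Adj Y D) (hBY : B ≠ Y) (hDX : D ≠ X) : (edgeSwap G X Y B D).IsTree := by
  classical
  have hXD : ¬ G.Adj X D := fun h =>
    hG.isAcyclic.cliqueFree le_rfl {X, Y, D} (is3Clique_triple_iff.mpr ⟨hXY, h, hYD⟩)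
  have hYB : ¬ G.Adj Y B := fun h =>
    hG.isAcyclic.cliqueFree le_rfl {X, Y, B} (is3Clique_triple_iff.mpr ⟨hXY, hXB, h⟩)
  have hedges : (edgeSwap G X Y B D).edgeSet =
      (G.edgeSet \ {s(X, B), s(Y, D)}) ∪ {s(X, D), s(Y, B)} := by
    rw [edgeSwap, edgeSet_fromEdgeSet, sdiff_eq_left, Set.disjoint_left]
    rintro f (⟨hf, -⟩ | rfl | rfl)
    exacts [G.not_isDiag_of_mem_edgeSet hf, by simpa using hDX.symm, by simpa using hBY.symm]
  have hdisj : Disjoint (G.edgeSet \ {s(X, B), s(Y, D)}) {s(X, D), s(Y, B)} := by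
    rw [Set.disjoint_left]
    rintro f ⟨hf, -⟩ (rfl | rfl)
    exacts [hXD hf, hYB hf]
  have hsub : {s(X, B), s(Y, D)} ⊆ G.edgeSet :=
    Set.insert_subset_iff.mpr ⟨hXB, Set.singleton_subset_iff.mpr hYD⟩
  rw [isTree_iff_connected_and_card] at hG ⊢
  refine ⟨connected_edgeSwap hG.1 hXY hBY hDX, ?_⟩
  rw [hedges, Nat.card_coe_set_eq, Set.ncard_union_eq hdisj,
    Set.ncard_pair (by simp [hXY.ne, hXB.ne]),
    ← Set.ncard_pair (by simp [hXY.ne, hBY] : s(X, B) ≠ s(Y, D)),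
    Set.ncard_sdiff_add_ncard_of_subset hsub, ← Nat.card_coe_set_eq, hG.2]

end EdgeSwap

section Reroute

variable {G G' : SimpleGraph V} {w w' : Sym2 V → ℝ} {u v a x y d x' y' : V}

theorem dw_lt_dw_of_reroute (hG : G.IsTree) (hG' : G'.IsTree)
    (hE : ∀ f ∈ G.edgeSet, x ∉ f → y ∉ f → f ∈ G'.edgeSet ∧ w' f = w f)
    {q : G.Walk u a} {h₁ : G.Adj a x} {h₂ : G.Adj x y} {h₃ : G.Adj y d} {r : G.Walk d v}
    (hp : (q.append (cons h₁ (cons h₂ (cons h₃ r)))).IsPath) (hx'y' : s(x', y') = s(x, y))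
    (h₁' : G'.Adj a x') (h₂' : G'.Adj x' y') (h₃' : G'.Adj y' d)
    (hw : w s(a, x) + w s(x, y) + w s(y, d) < w' s(a, x') + w' s(x', y') + w' s(y', d)) :
    dw G w u v < dw G' w' u v := by
  have hsupp := hp.support_nodup
  rw [support_append, support_cons, List.tail_cons, List.nodup_append'] at hsupp
  obtain ⟨-, hxyr, hdisj⟩ := hsupp
  have hxq : x ∉ q.support := fun hx => hdisj hx (by simp)
  have hyq : y ∉ q.support := fun hy => hdisj hy (by simp)
  obtain ⟨hxr, hyr⟩ : x ∉ r.support ∧ y ∉ r.support := by simp_all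
  have hq (f) (hf : f ∈ q.edges) : f ∈ G'.edgeSet ∧ w' f = w f :=
    hE f (q.edges_subset_edgeSet hf) (hxq <| mem_support_of_mem_edges hf ·)
      (hyq <| mem_support_of_mem_edges hf ·)
  have hr (f) (hf : f ∈ r.edges) : f ∈ G'.edgeSet ∧ w' f = w f :=
    hE f (r.edges_subset_edgeSet hf) (hxr <| mem_support_of_mem_edges hf ·)
      (hyr <| mem_support_of_mem_edges hf ·)
  let γ' := (q.transfer G' fun f hf => (hq f hf).1).append
    (cons h₁' (cons h₂' (cons h₃' (r.transfer G' fun f hf => (hr f hf).1))))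
  have hp' : γ'.IsPath := by
    rw [isPath_def]
    simp only [γ', support_append, support_cons, List.tail_cons, support_transfer]
    rw [isPath_def, support_append, support_cons, List.tail_cons] at hp
    rcases Sym2.eq_iff.mp hx'y' with ⟨rfl, rfl⟩ | ⟨rfl, rfl⟩
    · exact hp
    · exact ((List.Perm.swap _ _ _).append_left _).nodup_iff.mp hp
  rw [dw_eq_walkWeight_of_isTree w hG hp, dw_eq_walkWeight_of_isTree w' hG' hp']
  simp only [γ', walkWeight_append, walkWeight_cons,
    walkWeight_transfer w _ _ fun f hf => (hq f hf).2,
    walkWeight_transfer w _ _ fun f hf => (hr f hf).2]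
  linarith

theorem dw_lt_dw_of_mem_edges (hG : G.IsTree) (hG' : G'.IsTree)
    (hE : ∀ f ∈ G.edgeSet, x ∉ f → y ∉ f → f ∈ G'.edgeSet ∧ w' f = w f)
    {γ : G.Walk u v} (hγ : γ.IsPath) (ha : s(a, x) ∈ γ.edges) (hay : a ≠ y)
    (hxy : s(x, y) ∈ γ.edges) (hd : s(y, d) ∈ γ.edges) (hdx : d ≠ x)
    (hx'y' : s(x', y') = s(x, y))
    (h₁' : G'.Adj a x') (h₂' : G'.Adj x' y') (h₃' : G'.Adj y' d)
    (hw : w s(a, x) + w s(x, y) + w s(y, d) < w' s(a, x') + w' s(x', y') + w' s(y', d)) :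
    dw G w u v < dw G' w' u v := by
  -- `γ` may run through `x y` in either direction; in the second case `d y y'` play the roles of
  -- `a x x'`.
  rcases γ.exists_eq_append_cons_of_mem_edges hxy with
    ⟨q, h₂, r, rfl⟩ | ⟨q, h₂, r, rfl⟩
  · obtain ⟨q', h₁, h₃, r', hγ'⟩ := hγ.exists_eq_append_cons_cons_cons ha hay hd hdx
    exact dw_lt_dw_of_reroute hG hG' hE (hγ' ▸ hγ) hx'y' h₁' h₂' h₃' hw
  · obtain ⟨q', h₁, h₃, r', hγ'⟩ := hγ.exists_eq_append_cons_cons_cons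
      (Sym2.eq_swap ▸ hd) hdx (Sym2.eq_swap ▸ ha) hay
    refine dw_lt_dw_of_reroute hG hG' (fun f hf hy hx => hE f hf hx hy) (hγ' ▸ hγ)
      (by rw [Sym2.eq_swap, hx'y', Sym2.eq_swap]) h₃'.symm h₂'.symm h₁'.symm ?_
    simp only [Sym2.eq_swap] at hw ⊢
    linarith

end Reroute

theorem modification_increases_dist_general {V : Type*} [Fintype V] (G : SimpleGraph V)
    (hG : G.IsTree)
    (w : Sym2 V → ℝ)
    (X Y A B C D : V) (e : ℝ) (he : 0 < e)
    (hXY : G.Adj X Y) (hXA : G.Adj X A) (hXB : G.Adj X B)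
    (hYC : G.Adj Y C) (hYD : G.Adj Y D)
    (hAB : A ≠ B) (hAY : A ≠ Y) (hBY : B ≠ Y)
    (hCD : C ≠ D) (hCX : C ≠ X) (hDX : D ≠ X)
    (hwXY : w s(X, Y) = -2 * e)
    (G' : SimpleGraph V)
    (hG' : G' = SimpleGraph.fromEdgeSet
      ((G.edgeSet \ {s(X, B), s(Y, D)}) ∪ {s(X, D), s(Y, B)}))
    (w' : Sym2 V → ℝ)
    (h1 : w' s(X, Y) = 2 * e) (h2 : w' s(X, A) = w s(X, A) - e)
    (h3 : w' s(Y, B) = w s(X, B) - e) (h4 : w' s(Y, C) = w s(Y, C) - e)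
    (h5 : w' s(X, D) = w s(Y, D) - e)
    (h6 : ∀ f ∈ G'.edgeSet,
      f ∉ ({s(X, Y), s(X, A), s(Y, B), s(Y, C), s(X, D)} : Set (Sym2 V)) →
        w' f = w f)
    (u v : V)
    (hpath : (∃ γ : G.Walk u v, γ.IsPath ∧ s(A, X) ∈ γ.edges ∧
                s(X, Y) ∈ γ.edges ∧ s(Y, C) ∈ γ.edges) ∨
             (∃ γ : G.Walk u v, γ.IsPath ∧ s(B, X) ∈ γ.edges ∧
                s(X, Y) ∈ γ.edges ∧ s(Y, D) ∈ γ.edges)) :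
    dw G w u v < dw G' w' u v := by
  obtain rfl : G' = edgeSwap G X Y B D := hG'
  have hE (f) (hf : f ∈ G.edgeSet) (hX : X ∉ f) (hY : Y ∉ f) :
      f ∈ (edgeSwap G X Y B D).edgeSet ∧ w' f = w f := by
    refine ⟨mem_edgeSet_edgeSwap hf hX hY, h6 f (mem_edgeSet_edgeSwap hf hX hY) ?_⟩
    rintro (rfl | rfl | rfl | rfl | rfl) <;> simp_all
  have hXY' : (edgeSwap G X Y B D).Adj X Y :=
    edgeSwap_adj_of_adj hXY (by simp [hBY.symm, hXY.ne']) (by simp [hXY.ne, hDX.symm])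
  have hT := isTree_edgeSwap hG hXY hXB hYD hBY hDX
  rcases hpath with ⟨γ, hγ, hA, hXYγ, hC⟩ | ⟨γ, hγ, hB, hXYγ, hD⟩
  · refine dw_lt_dw_of_mem_edges hG hT hE hγ hA hAY hXYγ hC hCX rfl
      (edgeSwap_adj_of_adj hXA.symm (by simp [hAB, hXB.ne]) (by simp [hAY, hXY.ne])) hXY'
      (edgeSwap_adj_of_adj hYC (by simp [hXY.ne', hCX]) (by simp [hCD, hYC.ne'])) ?_
    rw [Sym2.eq_swap (a := A), h2, h1, h4, hwXY]
    linarith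
  · refine dw_lt_dw_of_mem_edges hG hT hE hγ hB hBY hXYγ hD hDX Sym2.eq_swap
      (edgeSwap_adj_right hBY.symm).symm hXY'.symm (edgeSwap_adj_left hDX.symm) ?_
    rw [Sym2.eq_swap (a := B) (b := X), Sym2.eq_swap (a := B) (b := Y),
      Sym2.eq_swap (a := Y) (b := X), h3, h1, h5, hwXY]
    linarith

/-- If the unique path in `G` between boundary points `u, v`
contains the edge sequence `AX, XY, YC` (or symmetrically `BX, XY, YD`), then
the modification strictly increases the distance between `u` and `v`. -/
theorem modification_increases_dist {V : Type*} [Fintype V] (G : SimpleGraph V)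
    (hG : G.IsTree)
    (M : Set V) (ρ : V → V → ℝ) (hρ : IsPseudometricOn M ρ)
    (w : Sym2 V → ℝ) (hfill : IsGenFilling G w M ρ)
    (X Y A B C D : V) (e : ℝ) (he : 0 < e)
    (hXM : X ∉ M) (hYM : Y ∉ M) (hdX : deg G X = 3) (hdY : deg G Y = 3)
    (hXY : G.Adj X Y) (hXA : G.Adj X A) (hXB : G.Adj X B)
    (hYC : G.Adj Y C) (hYD : G.Adj Y D)
    (hAB : A ≠ B) (hAY : A ≠ Y) (hBY : B ≠ Y)
    (hCD : C ≠ D) (hCX : C ≠ X) (hDX : D ≠ X)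
    (hwXY : w s(X, Y) = -2 * e)
    (G' : SimpleGraph V)
    (hG' : G' = SimpleGraph.fromEdgeSet
      ((G.edgeSet \ {s(X, B), s(Y, D)}) ∪ {s(X, D), s(Y, B)}))
    (w' : Sym2 V → ℝ)
    (h1 : w' s(X, Y) = 2 * e) (h2 : w' s(X, A) = w s(X, A) - e)
    (h3 : w' s(Y, B) = w s(X, B) - e) (h4 : w' s(Y, C) = w s(Y, C) - e)
    (h5 : w' s(X, D) = w s(Y, D) - e)
    (h6 : ∀ f ∈ G'.edgeSet,
      f ∉ ({s(X, Y), s(X, A), s(Y, B), s(Y, C), s(X, D)} : Set (Sym2 V)) →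
        w' f = w f)
    (u v : V) (hu : u ∈ M) (hv : v ∈ M)
    (hpath : (∃ γ : G.Walk u v, γ.IsPath ∧ s(A, X) ∈ γ.edges ∧
                s(X, Y) ∈ γ.edges ∧ s(Y, C) ∈ γ.edges) ∨
             (∃ γ : G.Walk u v, γ.IsPath ∧ s(B, X) ∈ γ.edges ∧
                s(X, Y) ∈ γ.edges ∧ s(Y, D) ∈ γ.edges)) :
    dw G w u v < dw G' w' u v :=
  modification_increases_dist_general G hG w X Y A B C D e he hXY hXA hXB hYC hYD hAB hAY hBY hCD
    hCX hDX hwXY G' hG' w' h1 h2 h3 h4 h5 h6 u v hpath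

end MinFill
end
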